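/- Let l ≥ 1 be an integer and let x ∈ O_K satisfy Tr_{K/F}(x) ≡ 0 (mod 𝔭_F^l). Then there exists z ∈ O_K with Tr_{K/F}(z) = 0 and z ≡ x (mod 𝔭_K^{el}). -/

import Mathlib

/-!
Since `p ∤ n = [K : F]`, the integer `n` is a unit of `O_F`, so `d = Tr(x) / n` lies in
`𝔭_F^l`. Then `z = x - d` has trace `Tr(x) - n d = 0`, and `d ∈ 𝔭_F^l O_K ⊆ 𝔭_K^{el}`.
-/

open IsLocalRing

theorem PadicInt.isUnit_natCast_of_not_dvd {p : ℕ} [Fact p.Prime] {n : ℕ} (h : ¬p ∣ n) :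
    IsUnit (n : ℤ_[p]) := by
  rw [PadicInt.isUnit_iff, PadicInt.norm_natCast_eq_one_iff]
  exact (Nat.Prime.coprime_iff_not_dvd Fact.out).2 h

theorem isUnit_natCast_of_not_dvd {p : ℕ} [Fact p.Prime] {R : Type*} [Ring R] [Algebra ℤ_[p] R]
    {n : ℕ} (h : ¬p ∣ n) : IsUnit (n : R) := by
  simpa using (PadicInt.isUnit_natCast_of_not_dvd h).map (algebraMap ℤ_[p] R)

theorem Ideal.algebraMap_mem_pow_ramificationIdx'_mul {R S : Type*} [CommRing R] [CommRing S]
    [Algebra R S] {p : Ideal R} {P : Ideal S} {l : ℕ} {d : R} (hd : d ∈ p ^ l) :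
    algebraMap R S d ∈ P ^ (ramificationIdx' p P * l) := by
  rw [pow_mul]
  refine Ideal.pow_right_mono Ideal.le_pow_ramificationIdx' l ?_
  rw [← Ideal.map_pow]
  exact Ideal.mem_map_of_mem _ hd

theorem Algebra.trace_sub_algebraMap_eq_zero {OF F OK K : Type*} [CommRing OF] [Field F]
    [CommRing OK] [Field K] [Algebra OF F] [Algebra F K] [Algebra OK K] [Algebra OF OK]
    [Algebra OF K] [IsScalarTower OF OK K] [IsScalarTower OF F K] {x : OK} {d : OF}
    (hd : algebraMap OF F (Module.finrank F K * d) = trace F K (algebraMap OK K x)) :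
    trace F K (algebraMap OK K (x - algebraMap OF OK d)) = 0 := by
  rw [map_sub, ← IsScalarTower.algebraMap_apply, IsScalarTower.algebraMap_apply OF F K, map_sub,
    trace_algebraMap, ← hd, map_mul, map_natCast, nsmul_eq_mul, sub_self]

theorem exists_trace_zero_congruent_general
    {p : ℕ} [Fact (Nat.Prime p)]
    {F : Type*} [Field F]
    {OF : Type*} [CommRing OF] [IsDomain OF] [IsDiscreteValuationRing OF]
    [Algebra OF F]
    [Algebra ℤ_[p] OF]
    {K : Type*} [Field K] [Algebra F K]
    {OK : Type*} [CommRing OK] [IsDomain OK] [IsDiscreteValuationRing OK]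
    [Algebra OK K]
    [Algebra OF OK] [Algebra OF K] [IsScalarTower OF OK K] [IsScalarTower OF F K]
    (hpn : ¬ p ∣ Module.finrank F K)
    (e : ℕ)
    (he : e = Ideal.ramificationIdx' (maximalIdeal OF) (maximalIdeal OK))
    (l : ℕ)
    (x : OK)
    (htr : ∃ c : OF, algebraMap OF F c = Algebra.trace F K (algebraMap OK K x) ∧
      c ∈ maximalIdeal OF ^ l) :
    ∃ z : OK, Algebra.trace F K (algebraMap OK K z) = 0 ∧
      z - x ∈ maximalIdeal OK ^ (e * l) := by
  obtain ⟨c, hc, hcl⟩ := htr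
  have hunit : IsUnit (Module.finrank F K : OF) := isUnit_natCast_of_not_dvd hpn
  obtain ⟨d, rfl⟩ := hunit.dvd (a := c)
  have hd : d ∈ maximalIdeal OF ^ l := (Ideal.unit_mul_mem_iff_mem _ hunit).1 hcl
  refine ⟨x - algebraMap OF OK d, Algebra.trace_sub_algebraMap_eq_zero hc, ?_⟩
  rw [sub_sub_cancel_left, he]
  exact neg_mem (Ideal.algebraMap_mem_pow_ramificationIdx'_mul hd)

theorem exists_trace_zero_congruent
    {p : ℕ} [Fact (Nat.Prime p)] (hp : p ≠ 2)
    {F : Type*} [Field F] [Algebra ℚ_[p] F] [FiniteDimensional ℚ_[p] F]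
    {OF : Type*} [CommRing OF] [IsDomain OF] [IsDiscreteValuationRing OF]
    [Algebra OF F] [IsFractionRing OF F]
    [Algebra ℤ_[p] OF] [Algebra ℤ_[p] F] [IsScalarTower ℤ_[p] ℚ_[p] F]
    [IsScalarTower ℤ_[p] OF F] [IsIntegralClosure OF ℤ_[p] F]
    {K : Type*} [Field K] [Algebra F K] [FiniteDimensional F K]
    {OK : Type*} [CommRing OK] [IsDomain OK] [IsDiscreteValuationRing OK]
    [Algebra OK K] [IsFractionRing OK K]
    [Algebra OF OK] [Algebra OF K] [IsScalarTower OF OK K] [IsScalarTower OF F K]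
    [IsIntegralClosure OK OF K]
    (hn : 1 < Module.finrank F K) (hpn : ¬ p ∣ Module.finrank F K)
    (e : ℕ)
    (he : e = Ideal.ramificationIdx' (maximalIdeal OF) (maximalIdeal OK))
    (l : ℕ) (hl : 1 ≤ l)
    (x : OK)
    (htr : ∃ c : OF, algebraMap OF F c = Algebra.trace F K (algebraMap OK K x) ∧
      c ∈ maximalIdeal OF ^ l) :
    ∃ z : OK, Algebra.trace F K (algebraMap OK K z) = 0 ∧
      z - x ∈ maximalIdeal OK ^ (e * l) :=
  exists_trace_zero_congruent_general hpn e he l x htr
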